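/- Let Z = e^{iπ(d−1)/12} F G be the Zauner unitary, where G is diagonal with G_{jj} = e^{iπ(d+1)j²/d} and F is the discrete Fourier transform. Then the three orthonormal bases given by the columns of I, Z, and Z² are pairwise mutually unbiased: |⟨j, Z k⟩|² = |⟨j, Z² k⟩|² = |(Z† Z²)_{jk}|² = 1/d for all j,k. -/

import Mathlib

open Matrix

/-- The discrete Fourier transform matrix `F_{jk} = ω^{jk}/√d`, `ω = e^{2πi/d}`. -/
noncomputable def Fmat (d : ℕ) : Matrix (Fin d) (Fin d) ℂ :=
  fun j k => Complex.exp (2 * Real.pi * Complex.I * ((j : ℕ) : ℂ) * ((k : ℕ) : ℂ) / d) /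
    (Real.sqrt d : ℂ)

/-- The diagonal matrix `G` with `G_{jj} = e^{iπ(d+1)j²/d}`. -/
noncomputable def Gmat (d : ℕ) : Matrix (Fin d) (Fin d) ℂ :=
  Matrix.diagonal fun j =>
    Complex.exp (Real.pi * Complex.I * ((d : ℂ) + 1) * ((j : ℕ) : ℂ) ^ 2 / d)

/-- The Zauner unitary `𝒵 = e^{iπ(d−1)/12} F G`. -/
noncomputable def Zauner (d : ℕ) : Matrix (Fin d) (Fin d) ℂ :=
  Complex.exp (Real.pi * Complex.I * ((d : ℂ) - 1) / 12) • (Fmat d * Gmat d)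

/-!
Since `F` and `G` are unitary, so is `𝒵`, whence `𝒵† 𝒵² = 𝒵`, and every entry of `𝒵 = c F G`
has modulus `1/√d`. Read on `ZMod d`, the diagonal of `G` is a phase `q` with
`q(x + y) = q(x) q(y) ψ(x y)` for the standard additive character `ψ`; this needs `d(d+1)` even.
Thus `(𝒵²)_{jk}` is `1/d` times a unimodular factor times the Gauss sum `∑ₓ φ(x)`, where
`φ(x) = q(x) ψ(x(j+k))` satisfies the same functional equation. Substituting `x = y + r` in
`|∑ₓ φ(x)|² = ∑_{x,y} φ(x) conj φ(y)` leaves `∑_r φ(r) ∑_y ψ(y r) = d φ(0) = d`,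
by orthogonality of characters.
-/

open Complex ComplexConjugate ZMod
open scoped Real

namespace AddChar

variable {R : Type*} [CommRing R] [Fintype R] [DecidableEq R]

theorem norm_sq_sum_eq_card_of_map_add {ψ : AddChar R ℂ} (hψ : ψ.IsPrimitive) {φ : R → ℂ}
    (hφ : ∀ x, ‖φ x‖ = 1) (hφ_add : ∀ x y, φ (x + y) = φ x * φ y * ψ (x * y)) :
    ‖∑ x, φ x‖ ^ 2 = Fintype.card R := by
  have hφ0 : φ 0 = 1 := by
    have h := hφ_add 0 0
    rw [add_zero, mul_zero, map_zero_eq_one, mul_one] at h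
    have hne : φ 0 ≠ 0 := norm_ne_zero_iff.mp (by rw [hφ]; exact one_ne_zero)
    exact (mul_right_eq_self₀.mp h.symm).resolve_right hne
  have hshift : ∀ y r, φ (y + r) * conj (φ y) = φ r * ψ (y * r) := fun y r => by
    rw [hφ_add, show φ y * φ r * ψ (y * r) * conj (φ y) = φ y * conj (φ y) * (φ r * ψ (y * r))
      by ring, mul_conj', hφ, ofReal_one, one_pow, one_mul]
  apply ofReal_injective
  push_cast
  calc ((‖∑ x, φ x‖ : ℝ) : ℂ) ^ 2 = ∑ y, ∑ x, φ x * conj (φ y) := by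
        rw [← mul_conj', map_sum, Finset.sum_mul_sum, Finset.sum_comm]
    _ = ∑ y, ∑ r, φ r * ψ (y * r) := by
        refine Finset.sum_congr rfl fun y _ => ?_
        rw [← Equiv.sum_comp (Equiv.addLeft y)]
        exact Finset.sum_congr rfl fun r _ => hshift y r
    _ = ∑ r, φ r * ∑ y, ψ (y * r) := by
        rw [Finset.sum_comm]
        simp only [Finset.mul_sum]
    _ = Fintype.card R := by
        simp only [sum_mulShift _ hψ, Nat.cast_ite, Nat.cast_zero, mul_ite, mul_zero,
          Finset.sum_ite_eq', Finset.mem_univ, if_true, hφ0, one_mul]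

end AddChar

theorem Fin.sum_natCast_zmod {M : Type*} [AddCommMonoid M] {d : ℕ} [NeZero d]
    (f : ZMod d → M) : ∑ m : Fin d, f m = ∑ x, f x := by
  refine Fintype.sum_equiv (ZMod.finEquiv d).toEquiv _ _ fun m => congrArg f ?_
  obtain ⟨n, rfl⟩ := Nat.exists_eq_succ_of_ne_zero (NeZero.ne d)
  exact Fin.cast_val_eq_self m

theorem ZMod.natCast_finVal_inj {d : ℕ} {j k : Fin d} : (j : ZMod d) = (k : ZMod d) ↔ j = k := by
  refine ⟨fun h => Fin.ext ?_, fun h => h ▸ rfl⟩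
  simpa [val_natCast_of_lt j.isLt, val_natCast_of_lt k.isLt] using congrArg val h

theorem ZMod.stdAddChar_natCast {N : ℕ} [NeZero N] (n : ℕ) :
    stdAddChar (n : ZMod N) = exp (2 * π * I * n / N) := by
  simpa using stdAddChar_coe (N := N) n

noncomputable def zaunerPhase (d : ℕ) (x : ZMod d) : ℂ :=
  exp (π * I * (d + 1) * (x.val : ℂ) ^ 2 / d)

section Zauner

variable {d : ℕ}

theorem norm_zaunerPhase (x : ZMod d) : ‖zaunerPhase d x‖ = 1 := by
  rw [zaunerPhase, show π * I * (d + 1) * (x.val : ℂ) ^ 2 / d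
    = ((π * (d + 1) * x.val ^ 2 / d : ℝ) : ℂ) * I by push_cast; ring]
  exact norm_exp_ofReal_mul_I _

theorem norm_exp_pi_I_mul_sub_one_div_twelve : ‖exp (π * I * ((d : ℂ) - 1) / 12)‖ = 1 := by
  simp [norm_exp]

theorem Gmat_eq_diagonal_zaunerPhase : Gmat d = diagonal fun j : Fin d => zaunerPhase d j := by
  simp only [Gmat, zaunerPhase, val_natCast_of_lt (Fin.is_lt _)]

theorem Gmat_mem_unitaryGroup : Gmat d ∈ unitaryGroup (Fin d) ℂ := by
  rw [mem_unitaryGroup_iff', Gmat_eq_diagonal_zaunerPhase, star_eq_conjTranspose,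
    diagonal_conjTranspose, diagonal_mul_diagonal, ← diagonal_one]
  congr 1
  ext j
  rw [Pi.star_apply, star_def, conj_mul', norm_zaunerPhase, ofReal_one, one_pow]

variable [NeZero d]

variable (d) in
theorem periodic_exp_pi_I_mul_sq :
    Function.Periodic (fun n : ℕ => exp (π * I * (d + 1) * (n : ℂ) ^ 2 / d)) d := by
  intro n
  obtain ⟨e, he⟩ := Nat.even_mul_succ_self d
  have he' : (d : ℂ) * (d + 1) = e + e := by exact_mod_cast he
  have hd : (d : ℂ) ≠ 0 := Nat.cast_ne_zero.mpr (NeZero.ne d)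
  simp only
  rw [show π * I * (d + 1) * ((n + d : ℕ) : ℂ) ^ 2 / d
      = π * I * (d + 1) * (n : ℂ) ^ 2 / d + ((d + 1) * n + e : ℕ) * (2 * π * I) by
    push_cast; field_simp; linear_combination (d : ℂ) * he',
    exp_add, exp_nat_mul_two_pi_mul_I, mul_one]

theorem zaunerPhase_add (x y : ZMod d) :
    zaunerPhase d (x + y) = zaunerPhase d x * zaunerPhase d y * stdAddChar (x * y) := by
  have hd : (d : ℂ) ≠ 0 := Nat.cast_ne_zero.mpr (NeZero.ne d)
  have hsum : zaunerPhase d (x + y) =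
      exp (π * I * (d + 1) * ((x.val + y.val : ℕ) : ℂ) ^ 2 / d) := by
    rw [zaunerPhase, val_add]
    exact (periodic_exp_pi_I_mul_sq d).map_mod_nat _
  have hψ : stdAddChar (x * y) = exp (2 * π * I * ((x.val * y.val : ℕ) : ℂ) / d) := by
    rw [← stdAddChar_natCast, Nat.cast_mul, natCast_zmod_val, natCast_zmod_val]
  rw [hsum, hψ, zaunerPhase, zaunerPhase, ← exp_add, ← exp_add,
    show π * I * (d + 1) * ((x.val + y.val : ℕ) : ℂ) ^ 2 / d
      = π * I * (d + 1) * (x.val : ℂ) ^ 2 / d + π * I * (d + 1) * (y.val : ℂ) ^ 2 / d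
        + 2 * π * I * ((x.val * y.val : ℕ) : ℂ) / d + (x.val * y.val : ℕ) * (2 * π * I) by
      push_cast; field_simp; ring,
    exp_add, exp_nat_mul_two_pi_mul_I, mul_one]

theorem norm_sq_sum_zaunerPhase_mul_stdAddChar (t : ZMod d) :
    ‖∑ x, zaunerPhase d x * stdAddChar (x * t)‖ ^ 2 = d := by
  refine (AddChar.norm_sq_sum_eq_card_of_map_add (isPrimitive_stdAddChar d) (fun x => ?_)
    fun x y => ?_).trans (by rw [ZMod.card])
  · rw [norm_mul, norm_zaunerPhase, AddChar.norm_apply, one_mul]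
  · rw [zaunerPhase_add, add_mul, AddChar.map_add_eq_mul]
    ring

theorem Fmat_apply (j k : Fin d) :
    Fmat d j k = stdAddChar ((j : ZMod d) * (k : ZMod d)) / (√d : ℂ) := by
  rw [← Nat.cast_mul, stdAddChar_natCast, Fmat]
  push_cast
  ring_nf

theorem Fmat_mem_unitaryGroup : Fmat d ∈ unitaryGroup (Fin d) ℂ := by
  have hd : (d : ℂ) ≠ 0 := Nat.cast_ne_zero.mpr (NeZero.ne d)
  rw [mem_unitaryGroup_iff']
  ext j k
  have hterm : ∀ m : Fin d, star (Fmat d) j m * Fmat d m k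
      = stdAddChar ((m : ZMod d) * ((k : ZMod d) - (j : ZMod d))) / d := fun m => by
    rw [star_apply, Fmat_apply, Fmat_apply, star_div₀, star_def, ← AddChar.map_neg_eq_conj,
      div_mul_div_comm, ← AddChar.map_add_eq_mul, conj_ofReal, ← ofReal_mul,
      Real.mul_self_sqrt (Nat.cast_nonneg d), ofReal_natCast, mul_sub, neg_add_eq_sub]
  rw [mul_apply, Finset.sum_congr rfl fun m _ => hterm m,
    Fin.sum_natCast_zmod fun x => stdAddChar (x * ((k : ZMod d) - (j : ZMod d))) / (d : ℂ),
    ← Finset.sum_div, AddChar.sum_mulShift _ (isPrimitive_stdAddChar d), one_apply, ZMod.card]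
  simp only [sub_eq_zero, natCast_finVal_inj, eq_comm (a := k)]
  split_ifs <;> simp [hd]

theorem Zauner_mem_unitaryGroup : Zauner d ∈ unitaryGroup (Fin d) ℂ := by
  refine Unitary.smul_mem_of_mem ?_ (mul_mem Fmat_mem_unitaryGroup Gmat_mem_unitaryGroup)
  rw [Unitary.mem_iff, star_def, conj_mul', mul_conj', norm_exp_pi_I_mul_sub_one_div_twelve]
  simp

theorem norm_sq_Zauner_apply (j k : Fin d) : ‖Zauner d j k‖ ^ 2 = 1 / d := by
  rw [Zauner, Matrix.smul_apply, smul_eq_mul, Gmat_eq_diagonal_zaunerPhase, mul_diagonal,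
    Fmat_apply, norm_mul, norm_mul, norm_div, norm_exp_pi_I_mul_sub_one_div_twelve,
    norm_zaunerPhase, AddChar.norm_apply, norm_real, Real.norm_of_nonneg (Real.sqrt_nonneg _),
    one_mul, mul_one, div_pow, Real.sq_sqrt (Nat.cast_nonneg d), one_pow]

theorem Zauner_mul_self_apply (j k : Fin d) :
    (Zauner d * Zauner d) j k = exp (π * I * ((d : ℂ) - 1) / 12) ^ 2 * zaunerPhase d k / d *
      ∑ x, zaunerPhase d x * stdAddChar (x * ((j : ZMod d) + (k : ZMod d))) := by
  have hterm : ∀ m : Fin d, (Fmat d * Gmat d) j m * (Fmat d * Gmat d) m k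
      = zaunerPhase d k / d *
        (zaunerPhase d m * stdAddChar ((m : ZMod d) * ((j : ZMod d) + (k : ZMod d)))) :=
    fun m => by
    rw [Gmat_eq_diagonal_zaunerPhase, mul_diagonal, mul_diagonal, Fmat_apply, Fmat_apply,
      mul_comm (j : ZMod d), mul_add, AddChar.map_add_eq_mul,
      show ∀ a b p q s : ℂ, a / s * p * (b / s * q) = a * b * p * q / (s * s) from
        fun _ _ _ _ _ => by ring,
      ← ofReal_mul, Real.mul_self_sqrt (Nat.cast_nonneg d), ofReal_natCast]
    ring
  rw [Zauner, smul_mul_smul_comm, Matrix.smul_apply, mul_apply,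
    Finset.sum_congr rfl fun m _ => hterm m, ← Finset.mul_sum,
    Fin.sum_natCast_zmod fun x => zaunerPhase d x * stdAddChar (x * ((j : ZMod d) + (k : ZMod d))),
    smul_eq_mul]
  ring

theorem norm_sq_Zauner_mul_self_apply (j k : Fin d) :
    ‖(Zauner d * Zauner d) j k‖ ^ 2 = 1 / d := by
  have hd : (d : ℝ) ≠ 0 := Nat.cast_ne_zero.mpr (NeZero.ne d)
  rw [Zauner_mul_self_apply, norm_mul, norm_div, norm_mul, norm_pow,
    norm_exp_pi_I_mul_sub_one_div_twelve, norm_zaunerPhase, norm_natCast, mul_pow,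
    norm_sq_sum_zaunerPhase_mul_stdAddChar]
  field_simp

end Zauner

/-- The three orthonormal bases given by the columns of `I`, `𝒵`, and
`𝒵²` are pairwise mutually unbiased:
`|⟨j, 𝒵 k⟩|² = |⟨j, 𝒵² k⟩|² = |(𝒵† 𝒵²)_{jk}|² = 1/d` for all `j,k`. -/
theorem zauner_bases_mub (d : ℕ) [NeZero d] :
    ∀ j k : Fin d,
      ‖Zauner d j k‖ ^ 2 = 1 / d ∧
      ‖(Zauner d * Zauner d) j k‖ ^ 2 = 1 / d ∧
      ‖((Zauner d)ᴴ * (Zauner d * Zauner d)) j k‖ ^ 2 = 1 / d := by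
  intro j k
  have hunitary : (Zauner d)ᴴ * Zauner d = 1 := mem_unitaryGroup_iff'.mp Zauner_mem_unitaryGroup
  refine ⟨norm_sq_Zauner_apply j k, norm_sq_Zauner_mul_self_apply j k, ?_⟩
  rw [← Matrix.mul_assoc, hunitary, Matrix.one_mul]
  exact norm_sq_Zauner_apply j k
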